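/- arXiv:2109.12815 — 3 statements merged into one kernel-verified Lean document; each statement's English description precedes it below -/
import Mathlib

section
/- Suppose 0 < Ω(r) ≤ C/⟨r⟩^6 for all r > 0 and Ω is continuous, where ⟨r⟩ = √(r²+2). Define b(r) = ∫_0^1 s·Ω(rs) ds for r > 0. Then there exist constants c₁, c₂ > 0 (depending on Ω) such that c₁/⟨r⟩² ≤ b(r) ≤ c₂/⟨r⟩² for all r > 0, provided additionally Ω(r) ≥ c/⟨r⟩^6 for some c > 0. -/
open Real Set Filter Topology MeasureTheory

/-- If `0 < c/⟨r⟩⁶ ≤ Ω(r) ≤ C/⟨r⟩⁶` with Ω continuous and `b(r) = ∫_0^1 s Ω(rs) ds`,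
then `b(r)` is comparable to `1/⟨r⟩²`, where `⟨r⟩² = r² + 2`. -/
theorem stmt1 (Ω : ℝ → ℝ) (C c : ℝ) (hC : 0 < C) (hc : 0 < c)
    (hΩcont : ContinuousOn Ω (Set.Ioi 0))
    (hupper : ∀ r > 0, 0 < Ω r ∧ Ω r ≤ C / (r ^ 2 + 2) ^ 3)
    (hlower : ∀ r > 0, c / (r ^ 2 + 2) ^ 3 ≤ Ω r)
    (b : ℝ → ℝ) (hb : ∀ r > 0, b r = ∫ s in (0:ℝ)..1, s * Ω (r * s)) :
    ∃ c₁ > (0:ℝ), ∃ c₂ > (0:ℝ), ∀ r > 0,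
      c₁ / (r ^ 2 + 2) ≤ b r ∧ b r ≤ c₂ / (r ^ 2 + 2) := by
  refine ⟨c / 162, by positivity, C / 8, by positivity, ?_⟩
  intro r hr
  have h2 : (0:ℝ) < r ^ 2 + 2 := by positivity
  set f : ℝ → ℝ := fun s => s * Ω (r * s) with hfdef
  have hfc : ContinuousOn f (Ioc 0 1) := by
    apply ContinuousOn.mul continuousOn_id
    apply hΩcont.comp (continuous_const.mul continuous_id).continuousOn
    intro s hs
    exact mul_pos hr hs.1
  have hbound : ∀ s ∈ Ioc (0:ℝ) 1, ‖f s‖ ≤ C := by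
    intro s hs
    have hrs : 0 < r * s := mul_pos hr hs.1
    have h1 := (hupper (r * s) hrs).1
    have h2' := (hupper (r * s) hrs).2
    have hd : (0:ℝ) < ((r*s)^2 + 2) ^ 3 := by positivity
    have h8 : (1:ℝ) ≤ ((r*s)^2 + 2) ^ 3 := by
      nlinarith [sq_nonneg (r*s), sq_nonneg ((r*s)^2),
        mul_nonneg (mul_nonneg (sq_nonneg (r*s)) (sq_nonneg (r*s))) (sq_nonneg (r*s))]
    have hΩC : Ω (r * s) ≤ C := le_trans h2' (by
      rw [div_le_iff₀ hd]; nlinarith)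
    rw [Real.norm_eq_abs, abs_of_nonneg (mul_nonneg hs.1.le h1.le)]
    calc s * Ω (r*s) ≤ 1 * C := mul_le_mul hs.2 hΩC h1.le (by norm_num)
      _ = C := one_mul C
  have hfi : IntervalIntegrable f volume 0 1 := by
    rw [intervalIntegrable_iff_integrableOn_Ioc_of_le (by norm_num)]
    exact ⟨hfc.aestronglyMeasurable measurableSet_Ioc,
      HasFiniteIntegral.restrict_of_bounded (C := C) (by simp [Real.volume_Ioc])
        ((MeasureTheory.ae_restrict_iff' measurableSet_Ioc).2 (Filter.Eventually.of_forall hbound))⟩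
  constructor
  · -- lower bound
    set t : ℝ := 1 / (r + 2) with htdef
    have ht0 : 0 < t := by positivity
    have ht1 : t ≤ 1 := by
      rw [htdef, div_le_one (by linarith)]; linarith
    have hsub1 : IntervalIntegrable f volume 0 t :=
      hfi.mono_set (by rw [uIcc_of_le ht0.le, uIcc_of_le (by norm_num : (0:ℝ) ≤ 1)]
                       exact Icc_subset_Icc le_rfl ht1)
    have hsub2 : IntervalIntegrable f volume t 1 :=
      hfi.mono_set (by rw [uIcc_of_le ht1, uIcc_of_le (by norm_num : (0:ℝ) ≤ 1)]
                       exact Icc_subset_Icc ht0.le le_rfl)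
    have hsplit : (∫ s in (0:ℝ)..1, f s) = (∫ s in (0:ℝ)..t, f s) + ∫ s in t..1, f s :=
      (intervalIntegral.integral_add_adjacent_intervals hsub1 hsub2).symm
    have hpos2 : 0 ≤ ∫ s in t..1, f s := by
      apply intervalIntegral.integral_nonneg ht1
      intro s hs
      have hs0 : 0 < s := lt_of_lt_of_le ht0 hs.1
      exact le_of_lt (mul_pos hs0 (hupper (r*s) (mul_pos hr hs0)).1)
    have hmono : (∫ s in (0:ℝ)..t, (c/27) * s) ≤ ∫ s in (0:ℝ)..t, f s := by
      apply intervalIntegral.integral_mono_on ht0.le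
        ((continuous_const.mul continuous_id).intervalIntegrable 0 t) hsub1
      intro s hs
      rcases eq_or_lt_of_le hs.1 with h | h
      · simp [hfdef, ← h]
      · have hrs : 0 < r * s := mul_pos hr h
        have hle3 : (r*s)^2 + 2 ≤ 3 := by
          have hst : r * s ≤ r * t := mul_le_mul_of_nonneg_left hs.2 hr.le
          have hrt : r * t ≤ 1 := by
            rw [htdef, mul_one_div, div_le_one (by linarith)]; linarith
          have h1 : r * s ≤ 1 := le_trans hst hrt
          nlinarith
        have hge2 : (2:ℝ) ≤ (r*s)^2 + 2 := by nlinarith [sq_nonneg (r*s)]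
        have h27 : ((r*s)^2 + 2)^3 ≤ 27 := by
          calc ((r*s)^2 + 2)^3 ≤ (3:ℝ)^3 := pow_le_pow_left₀ (by positivity) hle3 3
            _ = 27 := by norm_num
        have hd : (0:ℝ) < ((r*s)^2 + 2)^3 := by positivity
        have hΩge : c / 27 ≤ Ω (r * s) := by
          refine le_trans ?_ (hlower (r*s) hrs)
          exact div_le_div_of_nonneg_left hc.le hd h27
        calc (c/27) * s = s * (c/27) := mul_comm _ _
          _ ≤ s * Ω (r*s) := mul_le_mul_of_nonneg_left hΩge h.le
    have hcomp : (∫ s in (0:ℝ)..t, (c/27) * s) = c / 54 * t^2 := by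
      rw [intervalIntegral.integral_const_mul, integral_id]
      ring
    have heq : c / 54 * t^2 = c / (54*(r+2)^2) := by
      rw [htdef]; field_simp
    have hkey : c / 162 / (r^2 + 2) ≤ c / 54 * t^2 := by
      rw [heq, div_div, div_le_div_iff₀ (by positivity) (by positivity)]
      nlinarith [mul_nonneg hc.le (sq_nonneg (r-1))]
    rw [hb r hr, hsplit]
    calc c / 162 / (r^2 + 2) ≤ c / 54 * t^2 := hkey
      _ ≤ (∫ s in (0:ℝ)..t, f s) := by rw [← hcomp]; exact hmono
      _ ≤ (∫ s in (0:ℝ)..t, f s) + ∫ s in t..1, f s := le_add_of_nonneg_right hpos2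
  · -- upper bound
    have hcont2 : Continuous fun s : ℝ => s / ((r*s)^2 + 2)^2 := by
      apply Continuous.div continuous_id
      · exact (((continuous_const.mul continuous_id).pow 2).add continuous_const).pow 2
      · intro x; positivity
    have hFTC : (∫ s in (0:ℝ)..1, s / ((r*s)^2 + 2)^2) = 1 / (4 * (r^2 + 2)) := by
      have hkey : ∀ s : ℝ, HasDerivAt (fun x => -(2*r^2)⁻¹ * ((r*x)^2 + 2)⁻¹)
          (s / ((r*s)^2 + 2)^2) s := by
        intro s
        have h1 : HasDerivAt (fun x : ℝ => (r*x)^2 + 2) (2*r^2*s) s := by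
          have := (((hasDerivAt_id s).const_mul r).pow 2).add_const 2
          refine this.congr_deriv ?_
          simp [id]; ring
        have hne : (r*s)^2 + 2 ≠ 0 := by positivity
        have h3 := (h1.inv hne).const_mul (-(2*r^2)⁻¹)
        refine h3.congr_deriv ?_
        have hr2 : (2:ℝ) * r^2 ≠ 0 := by positivity
        field_simp
        try ring
      rw [intervalIntegral.integral_eq_sub_of_hasDerivAt (fun s _ => hkey s)
        (hcont2.intervalIntegrable 0 1)]
      have hrne : r ≠ 0 := hr.ne'
      field_simp
      ring
    have hmono : (∫ s in (0:ℝ)..1, f s) ≤ ∫ s in (0:ℝ)..1, (C/2) * (s / ((r*s)^2+2)^2) := by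
      apply intervalIntegral.integral_mono_on (by norm_num) hfi
        ((continuous_const.mul hcont2).intervalIntegrable 0 1)
      intro s hs
      rcases eq_or_lt_of_le hs.1 with h | h
      · simp [hfdef, ← h]
      · have hrs : 0 < r * s := mul_pos hr h
        have hd2 : (0:ℝ) < ((r*s)^2 + 2)^2 := by positivity
        have hd3 : (0:ℝ) < ((r*s)^2 + 2)^3 := by positivity
        have hΩle : Ω (r*s) ≤ (C/2) / ((r*s)^2 + 2)^2 := by
          refine le_trans (hupper (r*s) hrs).2 ?_
          rw [div_le_div_iff₀ hd3 hd2]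
          nlinarith [sq_nonneg (r*s), mul_nonneg (sq_nonneg (r*s)) (sq_nonneg ((r*s)^2+2))]
        calc s * Ω (r*s) ≤ s * ((C/2) / ((r*s)^2 + 2)^2) :=
              mul_le_mul_of_nonneg_left hΩle h.le
          _ = (C/2) * (s / ((r*s)^2+2)^2) := by ring
    rw [hb r hr]
    calc (∫ s in (0:ℝ)..1, f s) ≤ ∫ s in (0:ℝ)..1, (C/2) * (s / ((r*s)^2+2)^2) := hmono
      _ = (C/2) * (1 / (4 * (r^2+2))) := by
          rw [intervalIntegral.integral_const_mul, hFTC]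
      _ = C / 8 / (r^2 + 2) := by
          rw [mul_one_div, div_div, div_div]
          congr 1
          ring
end

section
/- Let m ∈ ℝ with |m| ≥ 1, and a ∈ C⁰([−2,2]) with ‖a‖_∞ ≤ m²/2. Suppose h ∈ C²((−2,2)) ∩ C⁰([−2,2]) solves (m² − ∂_v²)h + a·h = 0 on (−2,2) and ‖h‖_{L²(−2,2)} ≤ σ. Then there exist absolute constants C such that ‖h‖_{L²(−1,1)} ≤ C·σ·e^{−|m|/20}. -/
open Real Set Filter Topology MeasureTheory


lemma maxPrin {f f' f'' : ℝ → ℝ} {a b : ℝ}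
    (hcont : ContinuousOn f (Set.Icc a b))
    (hd1 : ∀ x ∈ Set.Ioo a b, HasDerivAt f (f' x) x)
    (hd2 : ∀ x ∈ Set.Ioo a b, HasDerivAt f' (f'' x) x)
    (hpos : ∀ x ∈ Set.Ioo a b, 0 < f x → 0 ≤ f'' x)
    (ha : f a ≤ 0) (hb : f b ≤ 0) :
    ∀ x ∈ Set.Icc a b, f x ≤ 0 := by
  by_contra hcon
  push_neg at hcon
  obtain ⟨x₀, hx₀, hfx₀⟩ := hcon
  have hax : a < x₀ := lt_of_le_of_ne hx₀.1 (by rintro rfl; linarith)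
  have hxb : x₀ < b := lt_of_le_of_ne hx₀.2 (by rintro rfl; linarith)
  have hab : a ≤ b := hx₀.1.trans hx₀.2
  set S1 : Set ℝ := Set.Icc a x₀ ∩ f ⁻¹' Set.Iic 0 with hS1def
  have hS1ne : S1.Nonempty := ⟨a, ⟨le_refl a, hax.le⟩, by simpa using ha⟩
  have hS1bdd : BddAbove S1 := ⟨x₀, fun v hv => hv.1.2⟩
  have hIccsub : Set.Icc a x₀ ⊆ Set.Icc a b := Set.Icc_subset_Icc le_rfl hx₀.2
  have hS1closed : IsClosed S1 :=
    (hcont.mono hIccsub).preimage_isClosed_of_isClosed isClosed_Icc isClosed_Iic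
  set α := sSup S1 with hαdef
  have hαS : α ∈ S1 := hS1closed.csSup_mem hS1ne hS1bdd
  have hfα : f α ≤ 0 := hαS.2
  have haα : a ≤ α := hαS.1.1
  have hαx : α < x₀ := hαS.1.2.lt_of_ne (fun h => by rw [h] at hfα; linarith)
  set S2 : Set ℝ := Set.Icc x₀ b ∩ f ⁻¹' Set.Iic 0 with hS2def
  have hS2ne : S2.Nonempty := ⟨b, ⟨hxb.le, le_rfl⟩, by simpa using hb⟩
  have hS2bdd : BddBelow S2 := ⟨x₀, fun v hv => hv.1.1⟩
  have hIccsub2 : Set.Icc x₀ b ⊆ Set.Icc a b := Set.Icc_subset_Icc hx₀.1 le_rfl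
  have hS2closed : IsClosed S2 :=
    (hcont.mono hIccsub2).preimage_isClosed_of_isClosed isClosed_Icc isClosed_Iic
  set β := sInf S2 with hβdef
  have hβS : β ∈ S2 := hS2closed.csInf_mem hS2ne hS2bdd
  have hfβ : f β ≤ 0 := hβS.2
  have hβb : β ≤ b := hβS.1.2
  have hxβ : x₀ < β := hβS.1.1.lt_of_ne (fun h => by rw [← h] at hfβ; linarith)
  have hαβ : α < β := hαx.trans hxβ
  have hposIoo : ∀ v ∈ Set.Ioo α β, 0 < f v := by
    rintro v ⟨hv1, hv2⟩
    by_contra hle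
    push_neg at hle
    rcases le_total v x₀ with hv | hv
    · have : v ∈ S1 := ⟨⟨haα.trans hv1.le, hv⟩, hle⟩
      exact absurd (le_csSup hS1bdd this) (not_le.2 hv1)
    · have : v ∈ S2 := ⟨⟨hv, hv2.le.trans hβb⟩, hle⟩
      exact absurd (csInf_le hS2bdd this) (not_le.2 hv2)
  have hsubIoo : Set.Ioo α β ⊆ Set.Ioo a b := Set.Ioo_subset_Ioo haα hβb
  have hcvx : ConvexOn ℝ (Set.Icc α β) f := by
    refine convexOn_of_hasDerivWithinAt2_nonneg (convex_Icc α β)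
      (hcont.mono (Set.Icc_subset_Icc haα hβb)) (f' := f') (f'' := f'') ?_ ?_ ?_
    · intro x hx
      rw [interior_Icc] at hx
      exact (hd1 x (hsubIoo hx)).hasDerivWithinAt
    · intro x hx
      rw [interior_Icc] at hx
      exact (hd2 x (hsubIoo hx)).hasDerivWithinAt
    · intro x hx
      rw [interior_Icc] at hx
      exact hpos x (hsubIoo hx) (hposIoo x hx)
  have hseg : x₀ ∈ segment ℝ α β := by
    rw [segment_eq_Icc hαβ.le]; exact ⟨hαx.le, hxβ.le⟩
  have := hcvx.le_on_segment (Set.left_mem_Icc.2 hαβ.le) (Set.right_mem_Icc.2 hαβ.le) hseg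
  have : f x₀ ≤ 0 := this.trans (max_le hfα hfβ)
  linarith


lemma exists_pt {h : ℝ → ℝ} {u v : ℝ} (huv : u < v) (hc : ContinuousOn h (Set.Icc u v)) :
    ∃ c ∈ Set.Icc u v, (v - u) * (h c)^2 ≤ ∫ x in u..v, (h x)^2 := by
  obtain ⟨c, hc1, hc2⟩ := isCompact_Icc.exists_isMinOn (Set.nonempty_Icc.2 huv.le) (hc.pow 2)
  refine ⟨c, hc1, ?_⟩
  have hmin : ∀ x ∈ Set.Icc u v, (h c)^2 ≤ (h x)^2 := fun x hx => hc2 hx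
  have hInt : IntervalIntegrable (fun x => (h x)^2) volume u v := by
    apply ContinuousOn.intervalIntegrable
    rw [Set.uIcc_of_le huv.le]
    exact hc.pow 2
  have := intervalIntegral.integral_mono_on huv.le intervalIntegrable_const hInt
    (fun x hx => hmin x hx)
  simpa [mul_comm] using this

set_option maxHeartbeats 1000000 in
/-- Exponential interior decay: if `|m| ≥ 1`, `‖a‖_∞ ≤ m²/2` on `[−2,2]`,
`(m² − ∂_v²)h + a·h = 0` on `(−2,2)` and `‖h‖_{L²(−2,2)} ≤ σ`, then
`‖h‖_{L²(−1,1)} ≤ C σ e^{−|m|/20}` with `C` absolute. -/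
theorem stmt9 :
    ∃ C > (0:ℝ), ∀ (m σ : ℝ) (a h : ℝ → ℝ),
      1 ≤ |m| →
      ContinuousOn a (Set.Icc (-2) 2) →
      (∀ v ∈ Set.Icc (-2:ℝ) 2, |a v| ≤ m ^ 2 / 2) →
      ContinuousOn h (Set.Icc (-2) 2) →
      (∀ v ∈ Set.Ioo (-2:ℝ) 2, DifferentiableAt ℝ h v ∧ DifferentiableAt ℝ (deriv h) v) →
      (∀ v ∈ Set.Ioo (-2:ℝ) 2, m ^ 2 * h v - deriv (deriv h) v + a v * h v = 0) →
      Real.sqrt (∫ v in (-2:ℝ)..2, (h v) ^ 2) ≤ σ →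
      Real.sqrt (∫ v in (-1:ℝ)..1, (h v) ^ 2) ≤ C * σ * Real.exp (-(|m| / 20)) := by
  refine ⟨8, by norm_num, ?_⟩
  intro m σ a h hm ha habd hhc hdiff hpde hL2
  set k := |m| with hk
  have hk0 : (0:ℝ) ≤ k := abs_nonneg m
  have hm2 : m^2 = k^2 := (sq_abs m).symm
  have hm2one : (1:ℝ) ≤ m^2 := by rw [hm2]; nlinarith
  have hσ0 : 0 ≤ σ := le_trans (Real.sqrt_nonneg _) hL2
  have hInt : ∀ u v : ℝ, -2 ≤ u → u ≤ v → v ≤ 2 →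
      IntervalIntegrable (fun x => (h x)^2) volume u v := by
    intro u v h1 h2 h3
    apply ContinuousOn.intervalIntegrable
    rw [Set.uIcc_of_le h2]
    exact (hhc.mono (Set.Icc_subset_Icc h1 h3)).pow 2
  have hnonneg : ∀ u v : ℝ, u ≤ v → 0 ≤ ∫ x in u..v, (h x)^2 := fun u v huv =>
    intervalIntegral.integral_nonneg huv (fun x _ => sq_nonneg _)
  have hI2 : ∫ x in (-2:ℝ)..2, (h x)^2 ≤ σ^2 := by
    have h0 : 0 ≤ ∫ x in (-2:ℝ)..2, (h x)^2 := hnonneg _ _ (by norm_num)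
    calc ∫ x in (-2:ℝ)..2, (h x)^2 = (Real.sqrt (∫ x in (-2:ℝ)..2, (h x)^2))^2 :=
          (Real.sq_sqrt h0).symm
      _ ≤ σ^2 := pow_le_pow_left₀ (Real.sqrt_nonneg _) hL2 2
  have hsub : ∀ u v : ℝ, -2 ≤ u → u ≤ v → v ≤ 2 → ∫ x in u..v, (h x)^2 ≤ σ^2 := by
    intro u v h1 h2 h3
    have A1 := intervalIntegral.integral_add_adjacent_intervals
      (hInt (-2) u (by norm_num) h1 (h2.trans h3)) (hInt u 2 h1 (h2.trans h3) le_rfl)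
    have A2 := intervalIntegral.integral_add_adjacent_intervals
      (hInt u v h1 h2 h3) (hInt v 2 (h1.trans h2) h3 le_rfl)
    have n1 := hnonneg (-2) u h1
    have n2 := hnonneg v 2 h3
    linarith
  obtain ⟨c₁, hc₁mem, hc₁⟩ := exists_pt (show (-2:ℝ) < -31/16 by norm_num)
    (hhc.mono (Set.Icc_subset_Icc (by norm_num) (by norm_num)))
  obtain ⟨c₂, hc₂mem, hc₂⟩ := exists_pt (show (31:ℝ)/16 < 2 by norm_num)
    (hhc.mono (Set.Icc_subset_Icc (by norm_num) (by norm_num)))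
  have hc₁2 : (h c₁)^2 ≤ 16*σ^2 := by
    have := hsub (-2) (-31/16) (by norm_num) (by norm_num) (by norm_num)
    nlinarith
  have hc₂2 : (h c₂)^2 ≤ 16*σ^2 := by
    have := hsub (31/16) 2 (by norm_num) (by norm_num) (by norm_num)
    nlinarith
  obtain ⟨hc₁l, hc₁r⟩ := hc₁mem
  obtain ⟨hc₂l, hc₂r⟩ := hc₂mem
  set A : ℝ := 16*σ^2 with hA
  have hA0 : 0 ≤ A := by positivity
  set φ : ℝ → ℝ := fun v => A * (Real.exp (k*(v - c₂)) + Real.exp (k*(c₁ - v))) with hφdef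
  set φ' : ℝ → ℝ := fun v => A * (k * Real.exp (k*(v - c₂)) - k * Real.exp (k*(c₁ - v)))
    with hφ'def
  have e1 : ∀ v : ℝ, HasDerivAt (fun v => Real.exp (k*(v - c₂)))
      (k * Real.exp (k*(v - c₂))) v := by
    intro v
    have := (((hasDerivAt_id v).sub_const c₂).const_mul k).exp
    exact this.congr_deriv (by simp only [id_eq]; ring)
  have e2 : ∀ v : ℝ, HasDerivAt (fun v => Real.exp (k*(c₁ - v)))
      (-(k * Real.exp (k*(c₁ - v)))) v := by
    intro v
    have := ((((hasDerivAt_const v c₁).sub (hasDerivAt_id v))).const_mul k).exp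
    exact this.congr_deriv (by simp only [Pi.sub_apply, id_eq]; ring)
  have hφd : ∀ v : ℝ, HasDerivAt φ (φ' v) v := by
    intro v
    have := ((e1 v).add (e2 v)).const_mul A
    exact this.congr_deriv (by simp only [hφ'def]; ring)
  have hφd2 : ∀ v : ℝ, HasDerivAt φ' (k^2 * φ v) v := by
    intro v
    have := (((e1 v).const_mul k).sub ((e2 v).const_mul k)).const_mul A
    exact this.congr_deriv (by simp only [hφdef]; ring)
  have hφc : Continuous φ := by rw [hφdef]; fun_prop
  have hIoosub : Set.Ioo c₁ c₂ ⊆ Set.Ioo (-2:ℝ) 2 :=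
    Set.Ioo_subset_Ioo hc₁l hc₂r
  have key : ∀ x ∈ Set.Icc c₁ c₂, (h x)^2 - φ x ≤ 0 := by
    apply maxPrin (f' := fun v => 2 * h v * deriv h v - φ' v)
      (f'' := fun v => 2*(deriv h v)^2 + 2*h v*deriv (deriv h) v - k^2 * φ v)
    · exact ((hhc.mono (Set.Icc_subset_Icc hc₁l hc₂r)).pow 2).sub hφc.continuousOn
    · intro x hx
      have hh := (hdiff x (hIoosub hx)).1.hasDerivAt
      have := (hh.pow 2).sub (hφd x)
      exact this.congr_deriv (by push_cast; ring)
    · intro x hx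
      have hh := (hdiff x (hIoosub hx)).1.hasDerivAt
      have hh' := (hdiff x (hIoosub hx)).2.hasDerivAt
      have := ((hh.const_mul 2).mul hh').sub (hφd2 x)
      exact this.congr_deriv (by ring)
    · intro x hx hp
      have hxmem : x ∈ Set.Icc (-2:ℝ) 2 := Set.Ioo_subset_Icc_self (hIoosub hx)
      have hpde' := hpde x (hIoosub hx)
      have habs := (abs_le.1 (habd x hxmem)).1
      have hd2v : deriv (deriv h) x = m^2 * h x + a x * h x := by linarith
      have h2 : 0 ≤ (a x + m^2/2) * (h x)^2 := mul_nonneg (by linarith) (sq_nonneg _)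
      have h3 : 0 < m^2 * ((h x)^2 - φ x) := mul_pos (by linarith) hp
      rw [hd2v, ← hm2]
      nlinarith [sq_nonneg (deriv h x)]
    · have hz : k*(c₁ - c₁) = 0 := by ring
      have hp := Real.exp_pos (k*(c₁ - c₂))
      show h c₁ ^ 2 - φ c₁ ≤ 0
      simp only [hφdef, hz, Real.exp_zero]
      nlinarith
    · have hz : k*(c₂ - c₂) = 0 := by ring
      have hp := Real.exp_pos (k*(c₁ - c₂))
      show h c₂ ^ 2 - φ c₂ ≤ 0
      simp only [hφdef, hz, Real.exp_zero]
      nlinarith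
  have hbd : ∀ x ∈ Set.Icc (-1:ℝ) 1, (h x)^2 ≤ 32*σ^2 * Real.exp (-(15*k/16)) := by
    intro x hx
    have h1 := key x ⟨by linarith [hx.1], by linarith [hx.2]⟩
    have eb1 : Real.exp (k*(x - c₂)) ≤ Real.exp (-(15*k/16)) := by
      apply Real.exp_le_exp.2; nlinarith [hx.2]
    have eb2 : Real.exp (k*(c₁ - x)) ≤ Real.exp (-(15*k/16)) := by
      apply Real.exp_le_exp.2; nlinarith [hx.1]
    have hmul : φ x ≤ A * (Real.exp (-(15*k/16)) + Real.exp (-(15*k/16))) :=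
      mul_le_mul_of_nonneg_left (add_le_add eb1 eb2) hA0
    rw [hA] at hmul
    linarith
  have hintbd : ∫ x in (-1:ℝ)..1, (h x)^2 ≤ 64*σ^2*Real.exp (-(15*k/16)) := by
    have := intervalIntegral.integral_mono_on (by norm_num : (-1:ℝ) ≤ 1)
      (hInt (-1) 1 (by norm_num) (by norm_num) (by norm_num)) intervalIntegrable_const
      (fun x hx => hbd x hx)
    simp only [intervalIntegral.integral_const, smul_eq_mul] at this
    linarith
  have h32 : Real.exp (-(15*k/32)) ^ 2 = Real.exp (-(15*k/16)) := by
    rw [pow_two, ← Real.exp_add]; congr 1; ring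
  have hEsq : 64*σ^2*Real.exp (-(15*k/16)) = (8*σ*Real.exp (-(15*k/32)))^2 := by
    rw [mul_pow, mul_pow, h32]; norm_num
  calc Real.sqrt (∫ v in (-1:ℝ)..1, (h v) ^ 2)
      ≤ Real.sqrt ((8*σ*Real.exp (-(15*k/32)))^2) :=
        Real.sqrt_le_sqrt (hintbd.trans_eq hEsq)
    _ = 8*σ*Real.exp (-(15*k/32)) := Real.sqrt_sq (by positivity)
    _ ≤ 8 * σ * Real.exp (-(k/20)) := by
        apply mul_le_mul_of_nonneg_left (Real.exp_le_exp.2 (by linarith)) (by positivity)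
end

section
/- Let k = 1, w ∈ ℝ, ε ∈ (0, 1/8), and define h_{w,ε}(v) = (B(v) − B(w) + iε)·e^v for v ∈ ℝ, where B(v) = b(e^v), D(v) = d(e^v), b = U/r, d = Ω'/r, and U' + U/r = Ω. Then h_{w,ε} solves (1 − ∂_v²)h + [e^{2v}D(v)/(B(v) − B(w) + iε)]·h = 0 on ℝ. -/
open Real Set Filter Topology

/-- The explicit function `h_{w,ε}(v) = (B(v) − B(w) + iε)eᵛ` solves
`(1 − ∂_v²)h + (e^{2v}D(v)/(B(v) − B(w) + iε))h = 0` on ℝ, where `B(v) = U(eᵛ)/eᵛ`,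
`D(v) = Ω'(eᵛ)/eᵛ` and `U' + U/r = Ω`. -/
theorem stmt17 (U Ω : ℝ → ℝ) (w ε : ℝ) (hε : ε ∈ Set.Ioo (0:ℝ) (1/8))
    (hU1 : ∀ r > 0, DifferentiableAt ℝ U r)
    (hU2 : ∀ r > 0, DifferentiableAt ℝ (deriv U) r)
    (hΩ : ∀ r > 0, DifferentiableAt ℝ Ω r)
    (hode : ∀ r > 0, deriv U r + U r / r = Ω r)
    (B D : ℝ → ℝ)
    (hB : ∀ v, B v = U (Real.exp v) / Real.exp v)
    (hD : ∀ v, D v = deriv Ω (Real.exp v) / Real.exp v)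
    (h : ℝ → ℂ)
    (hh : ∀ v, h v = (((B v - B w : ℝ) : ℂ) + Complex.I * (ε : ℂ)) * (Real.exp v : ℂ)) :
    ∀ v : ℝ, h v - deriv (deriv h) v
      + ((Real.exp (2*v) * D v : ℝ) : ℂ) / (((B v - B w : ℝ) : ℂ) + Complex.I * (ε : ℂ))
        * h v = 0 := by
  obtain ⟨hε0, hε8⟩ := hε
  -- derivative of B
  have hBderiv : ∀ v : ℝ, HasDerivAt B (Ω (Real.exp v) - 2 * B v) v := by
    intro v
    have hr : (0:ℝ) < Real.exp v := Real.exp_pos v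
    have hU' : HasDerivAt (fun v => U (Real.exp v)) (deriv U (Real.exp v) * Real.exp v) v :=
      ((hU1 _ hr).hasDerivAt).comp v (Real.hasDerivAt_exp v)
    have hdiv : HasDerivAt (fun v => U (Real.exp v) / Real.exp v)
        ((deriv U (Real.exp v) * Real.exp v * Real.exp v - U (Real.exp v) * Real.exp v)
          / (Real.exp v)^2) v :=
      hU'.div (Real.hasDerivAt_exp v) (ne_of_gt hr)
    have hUo : deriv U (Real.exp v) = Ω (Real.exp v) - U (Real.exp v) / Real.exp v := by
      have := hode _ hr; linarith
    have heq : (deriv U (Real.exp v) * Real.exp v * Real.exp v - U (Real.exp v) * Real.exp v)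
          / (Real.exp v)^2 = Ω (Real.exp v) - 2 * B v := by
      rw [hB, hUo]; field_simp; ring
    rw [heq] at hdiv
    exact hdiv.congr_of_eventuallyEq (by filter_upwards with x; rw [hB])
  have hBeq : deriv B = fun v => Ω (Real.exp v) - 2 * B v := funext fun v => (hBderiv v).deriv
  -- first derivative of h
  have hhderiv : ∀ v : ℝ, HasDerivAt h
      ((((Ω (Real.exp v) - 2 * B v : ℝ) : ℂ) + (((B v - B w : ℝ) : ℂ) + Complex.I * (ε:ℂ)))
        * (Real.exp v : ℂ)) v := by
    intro v
    have h1 : HasDerivAt (fun v => (((B v - B w : ℝ) : ℂ) + Complex.I * (ε:ℂ)))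
        ((Ω (Real.exp v) - 2 * B v : ℝ) : ℂ) v :=
      (((hBderiv v).sub_const (B w)).ofReal_comp).add_const _
    have h2 : HasDerivAt (fun v : ℝ => ((Real.exp v : ℝ) : ℂ)) ((Real.exp v : ℝ) : ℂ) v :=
      (Real.hasDerivAt_exp v).ofReal_comp
    have h3 := h1.mul h2
    have h4 : h =ᶠ[nhds v] fun v => (((B v - B w : ℝ) : ℂ) + Complex.I * (ε:ℂ))
        * ((Real.exp v : ℝ) : ℂ) := by filter_upwards with x; rw [hh]
    refine (h3.congr_of_eventuallyEq h4).congr_deriv ?_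
    push_cast
    ring
  have hh1eq : deriv h = fun v =>
      ((((Ω (Real.exp v) - 2 * B v : ℝ) : ℂ) + (((B v - B w : ℝ) : ℂ) + Complex.I * (ε:ℂ)))
        * (Real.exp v : ℂ)) := funext fun v => (hhderiv v).deriv
  intro v
  have hr : (0:ℝ) < Real.exp v := Real.exp_pos v
  -- second derivative of h at v
  have hh2 : HasDerivAt (deriv h)
      (((((deriv Ω (Real.exp v) * Real.exp v - 2 * (Ω (Real.exp v) - 2 * B v))
            + (Ω (Real.exp v) - 2 * B v) : ℝ) : ℂ)
        + ((((Ω (Real.exp v) - 2 * B v) + (B v - B w) : ℝ) : ℂ) + Complex.I * (ε:ℂ)))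
        * (Real.exp v : ℂ)) v := by
    rw [hh1eq]
    have hΩc : HasDerivAt (fun v => Ω (Real.exp v)) (deriv Ω (Real.exp v) * Real.exp v) v :=
      ((hΩ _ hr).hasDerivAt).comp v (Real.hasDerivAt_exp v)
    have hc1 : HasDerivAt (fun v : ℝ => ((Ω (Real.exp v) - 2 * B v : ℝ) : ℂ))
        ((deriv Ω (Real.exp v) * Real.exp v - 2 * (Ω (Real.exp v) - 2 * B v) : ℝ) : ℂ) v :=
      (hΩc.sub (HasDerivAt.const_mul 2 (hBderiv v))).ofReal_comp
    have hc2 : HasDerivAt (fun v => (((B v - B w : ℝ) : ℂ) + Complex.I * (ε:ℂ)))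
        ((Ω (Real.exp v) - 2 * B v : ℝ) : ℂ) v :=
      (((hBderiv v).sub_const (B w)).ofReal_comp).add_const _
    have h2 : HasDerivAt (fun v : ℝ => ((Real.exp v : ℝ) : ℂ)) ((Real.exp v : ℝ) : ℂ) v :=
      (Real.hasDerivAt_exp v).ofReal_comp
    have h3 := (hc1.add hc2).mul h2
    refine h3.congr_deriv ?_
    simp only [Pi.add_apply]
    push_cast
    ring
  have hden : (((B v - B w : ℝ) : ℂ) + Complex.I * (ε:ℂ)) ≠ 0 := by
    intro hc
    have := congrArg Complex.im hc
    simp at this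
    linarith
  have key : Real.exp (2*v) * D v = deriv Ω (Real.exp v) * Real.exp v := by
    rw [hD, show (2:ℝ)*v = v + v by ring, Real.exp_add]
    field_simp
  have hx : ∀ x e : ℂ, x / (((B v - B w : ℝ) : ℂ) + Complex.I * (ε:ℂ))
      * ((((B v - B w : ℝ) : ℂ) + Complex.I * (ε:ℂ)) * e) = x * e := by
    intro x e
    rw [div_mul_eq_mul_div, mul_comm (((B v - B w : ℝ) : ℂ) + Complex.I * (ε:ℂ)) e,
      ← mul_assoc, mul_div_cancel_right₀ _ hden]
  rw [hh2.deriv, hh v, key, hx]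
  push_cast
  ring
end
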